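/- arXiv:1405.0954 — 7 statements merged into one kernel-verified Lean document; each statement's English description precedes it below -/
import Mathlib

section
/- Let A be a generalized Boolean algebra and S ⊆ A a nonempty subset. Suppose d is a least upper bound of S (IsLUB S d) and d' is a least upper bound of the set {d \ s | s ∈ S} (IsLUB ((fun s => d \ s) '' S) d'). Then d \ d' is a greatest lower bound of S (IsGLB S (d \ d')). -/
section GeneralizedBooleanAlgebra

variable {A : Type*} [GeneralizedBooleanAlgebra A] {S : Set A} {c d d' : A}

theorem sdiff_mem_lowerBounds_of_mem_upperBounds_image_sdiff
    (hd' : d' ∈ upperBounds ((fun s => d \ s) '' S)) : d \ d' ∈ lowerBounds S := by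
  intro s hs
  calc d \ d' ≤ d \ (d \ s) := sdiff_le_sdiff_left (hd' ⟨s, hs, rfl⟩)
    _ = d ⊓ s := sdiff_sdiff_right_self
    _ ≤ s := inf_le_right

theorem sdiff_mem_upperBounds_image_sdiff_of_mem_lowerBounds (hc : c ∈ lowerBounds S) :
    d \ c ∈ upperBounds ((fun s => d \ s) '' S) := by
  rintro _ ⟨s, hs, rfl⟩
  exact sdiff_le_sdiff_left (hc hs)

theorem le_sdiff_of_le_of_le_sdiff (hcd : c ≤ d) (hd' : d' ≤ d \ c) : c ≤ d \ d' :=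
  le_sdiff.2 ⟨hcd, disjoint_sdiff_self_right.mono_right hd'⟩

end GeneralizedBooleanAlgebra

theorem ershov_glb_of_lub_sdiff {A : Type*} [GeneralizedBooleanAlgebra A] {S : Set A}
    (hS : S.Nonempty) {d d' : A} (hd : IsLUB S d)
    (hd' : IsLUB ((fun s => d \ s) '' S) d') : IsGLB S (d \ d') := by
  refine ⟨sdiff_mem_lowerBounds_of_mem_upperBounds_image_sdiff hd'.1, fun c hc => ?_⟩
  obtain ⟨s, hs⟩ := hS
  have hcd : c ≤ d := (hc hs).trans (hd.1 hs)
  exact le_sdiff_of_le_of_le_sdiff hcd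
    (hd'.2 (sdiff_mem_upperBounds_image_sdiff_of_mem_lowerBounds hc))
end

section
/- Every C-term function f in n variables over a generalized Boolean algebra A admits a disjunctive normal form: there exist m ≥ 1 and nonempty finite sets P₁, …, P_m of pairs of atomic functions such that for every v : Fin n → A, f v = the supremum over i ∈ {1,…,m} of the infimum over (p, q) ∈ P_i of (p v \ q v), where an atomic function is either a coordinate projection v ↦ v j (j : Fin n) or a constant function v ↦ c with c ∈ C. -/
/-- C-term functions in `n` variables over a generalized Boolean algebra `A`:
the smallest set of functions `(Fin n → A) → A` containing coordinate projections
and constants from `C`, closed under pointwise `⊔`, `⊓` and `\`. -/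
inductive IsTermFun {A : Type*} [GeneralizedBooleanAlgebra A] (C : Set A) (n : ℕ) :
    ((Fin n → A) → A) → Prop
  | proj (i : Fin n) : IsTermFun C n (fun v => v i)
  | const {c : A} (hc : c ∈ C) : IsTermFun C n (fun _ => c)
  | sup {f g : (Fin n → A) → A} : IsTermFun C n f → IsTermFun C n g →
      IsTermFun C n (fun v => f v ⊔ g v)
  | inf {f g : (Fin n → A) → A} : IsTermFun C n f → IsTermFun C n g →
      IsTermFun C n (fun v => f v ⊓ g v)
  | sdiff {f g : (Fin n → A) → A} : IsTermFun C n f → IsTermFun C n g →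
      IsTermFun C n (fun v => f v \ g v)

/-- An atomic function is a coordinate projection or a constant from `C`. -/
def IsAtomicFun {A : Type*} [GeneralizedBooleanAlgebra A] (C : Set A) (n : ℕ)
    (p : (Fin n → A) → A) : Prop :=
  (∃ j : Fin n, p = fun v => v j) ∨ ∃ c ∈ C, p = fun _ => c

/-!
Normal forms are built by induction on the term. Finite joins of clauses are closed under `⊔`
(union of the clause sets) and `⊓` (distributivity: pairwise unions of clauses), hence under
nonempty finite joins and meets. For `\`, the identities `a \ ⨆ bᵢ = ⨅ (a \ bᵢ)`,
`a \ ⨅ bᵢ = ⨆ (a \ bᵢ)` and `a \ (p \ q) = (a \ p) ⊔ (a ⊓ q)` reduce everything to `f \ p` with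
`p` atomic. That case is handled clause by clause: a clause `γ` containing `(p₀, q₀)` lies below
`p₀`, so `γ \ p = γ ⊓ (p₀ \ p)`, a meet of two clauses.
-/

namespace Finset

theorem sup_eq_sup_univ_equivFin {α ι : Type*} [SemilatticeSup α] [OrderBot α]
    (s : Finset ι) (f : ι → α) :
    s.sup f = (univ : Finset (Fin s.card)).sup fun i => f (s.equivFin.symm i) := by
  rw [← sup_attach, attach_eq_univ, ← univ_map_equiv_to_embedding s.equivFin.symm, sup_map]
  rfl

section GeneralizedBooleanAlgebra

variable {α ι : Type*} [GeneralizedBooleanAlgebra α] {s : Finset ι}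

theorem sup'_sdiff_right (hs : s.Nonempty) (f : ι → α) (a : α) :
    (s.sup' hs fun b => f b \ a) = s.sup' hs f \ a := by
  simp only [sup'_eq_sup, sup_sdiff_right]

theorem inf'_sdiff_left (hs : s.Nonempty) (f : ι → α) (a : α) :
    (s.inf' hs fun b => a \ f b) = a \ s.sup' hs f := by
  induction hs using Nonempty.cons_induction with
  | singleton => rw [sup'_singleton, inf'_singleton]
  | cons _ _ _ hs ih => rw [sup'_cons hs, inf'_cons hs, ih, sdiff_sup]

theorem sup'_sdiff_left (hs : s.Nonempty) (f : ι → α) (a : α) :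
    (s.sup' hs fun b => a \ f b) = a \ s.inf' hs f := by
  induction hs using Nonempty.cons_induction with
  | singleton => rw [sup'_singleton, inf'_singleton]
  | cons _ _ _ hs ih => rw [sup'_cons hs, inf'_cons hs, ih, sdiff_inf]

end GeneralizedBooleanAlgebra

end Finset

section DNF

variable {A : Type*} [GeneralizedBooleanAlgebra A] {C : Set A} {n : ℕ}

abbrev Clause (A : Type*) [GeneralizedBooleanAlgebra A] (n : ℕ) :=
  {γ : Finset (((Fin n → A) → A) × ((Fin n → A) → A)) // γ.Nonempty}

def Clause.eval (γ : Clause A n) : (Fin n → A) → A :=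
  γ.1.inf' γ.2 fun pq => pq.1 \ pq.2

def Clause.IsAtomic (C : Set A) (γ : Clause A n) : Prop :=
  ∀ pq ∈ γ.1, IsAtomicFun C n pq.1 ∧ IsAtomicFun C n pq.2

def HasDNF (C : Set A) (n : ℕ) (f : (Fin n → A) → A) : Prop :=
  ∃ (T : Finset (Clause A n)) (hT : T.Nonempty),
    (∀ γ ∈ T, γ.IsAtomic C) ∧ f = T.sup' hT Clause.eval

theorem Clause.IsAtomic.hasDNF {γ : Clause A n} (hγ : γ.IsAtomic C) : HasDNF C n γ.eval :=
  ⟨{γ}, Finset.singleton_nonempty γ, by simpa using hγ, (Finset.sup'_singleton _).symm⟩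

theorem hasDNF_sdiff_of_isAtomicFun {p q : (Fin n → A) → A}
    (hp : IsAtomicFun C n p) (hq : IsAtomicFun C n q) : HasDNF C n (p \ q) := by
  have hγ : Clause.IsAtomic C ⟨{(p, q)}, Finset.singleton_nonempty _⟩ := by
    simpa [Clause.IsAtomic] using ⟨hp, hq⟩
  simpa [Clause.eval] using hγ.hasDNF

theorem IsAtomicFun.hasDNF (hbot : ⊥ ∈ C) {p : (Fin n → A) → A} (hp : IsAtomicFun C n p) :
    HasDNF C n p := by
  simpa using hasDNF_sdiff_of_isAtomicFun (q := ⊥) hp (Or.inr ⟨⊥, hbot, rfl⟩)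

namespace HasDNF

variable {f g : (Fin n → A) → A}

theorem sup (hf : HasDNF C n f) (hg : HasDNF C n g) : HasDNF C n (f ⊔ g) := by
  classical
  obtain ⟨T, hT, hTat, rfl⟩ := hf
  obtain ⟨U, hU, hUat, rfl⟩ := hg
  exact ⟨T ∪ U, hT.mono Finset.subset_union_left, Finset.forall_mem_union.2 ⟨hTat, hUat⟩,
    (Finset.sup'_union hT hU _).symm⟩

theorem inf (hf : HasDNF C n f) (hg : HasDNF C n g) : HasDNF C n (f ⊓ g) := by
  classical
  obtain ⟨T, hT, hTat, rfl⟩ := hf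
  obtain ⟨U, hU, hUat, rfl⟩ := hg
  let union : Clause A n × Clause A n → Clause A n := fun γδ =>
    ⟨γδ.1.1 ∪ γδ.2.1, γδ.1.2.mono Finset.subset_union_left⟩
  refine ⟨(T ×ˢ U).image union, (hT.product hU).image _, ?_, ?_⟩
  · simp only [Finset.mem_image, Finset.mem_product, forall_exists_index, and_imp]
    rintro _ γδ hγ hδ rfl pq hpq
    rcases Finset.mem_union.1 hpq with h | h
    · exact hTat _ hγ pq h
    · exact hUat _ hδ pq h
  · rw [Finset.sup'_inf_sup', Finset.sup'_image]
    exact Finset.sup'_congr _ rfl fun γδ _ => (Finset.inf'_union γδ.1.2 γδ.2.2 _).symm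

theorem finset_sup' {ι : Type*} {s : Finset ι} (hs : s.Nonempty) {g : ι → (Fin n → A) → A}
    (hg : ∀ i ∈ s, HasDNF C n (g i)) : HasDNF C n (s.sup' hs g) :=
  Finset.sup'_induction hs g (fun _ h₁ _ h₂ => h₁.sup h₂) hg

theorem finset_inf' {ι : Type*} {s : Finset ι} (hs : s.Nonempty) {g : ι → (Fin n → A) → A}
    (hg : ∀ i ∈ s, HasDNF C n (g i)) : HasDNF C n (s.inf' hs g) :=
  Finset.inf'_induction hs g (fun _ h₁ _ h₂ => h₁.inf h₂) hg

theorem sdiff_of_isAtomicFun (hf : HasDNF C n f) {p : (Fin n → A) → A}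
    (hp : IsAtomicFun C n p) : HasDNF C n (f \ p) := by
  obtain ⟨T, hT, hTat, rfl⟩ := hf
  rw [← Finset.sup'_sdiff_right]
  refine finset_sup' hT fun γ hγ => ?_
  obtain ⟨pq, hpq⟩ := γ.2
  have hle : γ.eval ≤ pq.1 := (Finset.inf'_le _ hpq).trans sdiff_le
  rw [← inf_eq_left.2 hle, inf_sdiff_assoc]
  exact (hTat γ hγ).hasDNF.inf (hasDNF_sdiff_of_isAtomicFun (hTat γ hγ pq hpq).1 hp)

theorem sdiff (hbot : ⊥ ∈ C) (hf : HasDNF C n f) (hg : HasDNF C n g) : HasDNF C n (f \ g) := by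
  obtain ⟨T, hT, hTat, rfl⟩ := hg
  rw [← Finset.inf'_sdiff_left]
  refine finset_inf' hT fun γ hγ => ?_
  rw [Clause.eval, ← Finset.sup'_sdiff_left]
  refine finset_sup' γ.2 fun pq hpq => ?_
  obtain ⟨hp, hq⟩ := hTat γ hγ pq hpq
  rw [sdiff_sdiff_right']
  exact (hf.sdiff_of_isAtomicFun hp).sup (hf.inf (hq.hasDNF hbot))

end HasDNF

theorem IsTermFun.hasDNF (hbot : ⊥ ∈ C) {f : (Fin n → A) → A} (hf : IsTermFun C n f) :
    HasDNF C n f := by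
  induction hf with
  | proj i => exact IsAtomicFun.hasDNF hbot (Or.inl ⟨i, rfl⟩)
  | const hc => exact IsAtomicFun.hasDNF hbot (Or.inr ⟨_, hc, rfl⟩)
  | sup _ _ ihf ihg => exact ihf.sup ihg
  | inf _ _ ihf ihg => exact ihf.inf ihg
  | sdiff _ _ ihf ihg => exact ihf.sdiff hbot ihg

end DNF

theorem ershov_term_dnf_general {A : Type*} [GeneralizedBooleanAlgebra A] {C : Set A}
    (hbot : ⊥ ∈ C)
    {n : ℕ} {f : (Fin n → A) → A} (hf : IsTermFun C n f) :
    ∃ (m : ℕ), 1 ≤ m ∧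
      ∃ (P : Fin m → Finset (((Fin n → A) → A) × ((Fin n → A) → A)))
        (hP : ∀ i, (P i).Nonempty),
        (∀ i, ∀ pq ∈ P i, IsAtomicFun C n pq.1 ∧ IsAtomicFun C n pq.2) ∧
        ∀ v : Fin n → A,
          f v = (Finset.univ : Finset (Fin m)).sup
            (fun i => (P i).inf' (hP i) (fun pq => pq.1 v \ pq.2 v)) := by
  obtain ⟨T, hT, hTat, rfl⟩ := hf.hasDNF hbot
  refine ⟨T.card, hT.card_pos, fun i => (T.equivFin.symm i).1.1,
    fun i => (T.equivFin.symm i).1.2, fun i => hTat _ (T.equivFin.symm i).2, fun v => ?_⟩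
  rw [Finset.sup'_apply, Finset.sup'_eq_sup, Finset.sup_eq_sup_univ_equivFin]
  simp only [Clause.eval, Finset.inf'_apply, Pi.sdiff_apply]

theorem ershov_term_dnf {A : Type*} [GeneralizedBooleanAlgebra A] {C : Set A}
    (hbot : ⊥ ∈ C)
    (hsup : ∀ a ∈ C, ∀ b ∈ C, a ⊔ b ∈ C)
    (hinf : ∀ a ∈ C, ∀ b ∈ C, a ⊓ b ∈ C)
    (hsdiff : ∀ a ∈ C, ∀ b ∈ C, a \ b ∈ C)
    {n : ℕ} {f : (Fin n → A) → A} (hf : IsTermFun C n f) :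
    ∃ (m : ℕ), 1 ≤ m ∧
      ∃ (P : Fin m → Finset (((Fin n → A) → A) × ((Fin n → A) → A)))
        (hP : ∀ i, (P i).Nonempty),
        (∀ i, ∀ pq ∈ P i, IsAtomicFun C n pq.1 ∧ IsAtomicFun C n pq.2) ∧
        ∀ v : Fin n → A,
          f v = (Finset.univ : Finset (Fin m)).sup
            (fun i => (P i).inf' (hP i) (fun pq => pq.1 v \ pq.2 v)) :=
  ershov_term_dnf_general hbot hf
end

section
/- If C is finite, then for every n : ℕ the set of C-term functions in n variables over a generalized Boolean algebra A is finite. -/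
/-!
Term functions form the subalgebra (for `⊔`, `⊓`, `\`) of the generalized Boolean algebra of
functions `(Fin n → A) → A` generated by the finitely many projections and constants. In any
generalized Boolean algebra, if `L` is a sublattice containing `⊥`, the finite joins of
differences `a \ b` with `a b ∈ L` already contain `L` and are closed under `⊔`, `⊓` and `\`.
A finite set generates a finite sublattice, and then there are only finitely many such joins.
-/

open Set

section GeneralizedBooleanAlgebra

variable {α : Type*} [GeneralizedBooleanAlgebra α]

theorem sdiff_inf_sdiff_eq (a b c d : α) : a \ b ⊓ c \ d = (a ⊓ c) \ (b ⊔ d) := by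
  rw [sdiff_inf_right_comm, ← inf_sdiff_assoc, sdiff_sdiff_left, sup_comm]

theorem sdiff_sdiff_sdiff_eq (a b c d : α) :
    (a \ b) \ (c \ d) = a \ (b ⊔ c) ⊔ (a ⊓ d) \ b := by
  rw [sdiff_sdiff_right', sdiff_sdiff_left, sdiff_inf_right_comm]

def supsOfSdiffs (L : Set α) : Set α :=
  {x | ∃ t : Finset (L × L), x = t.sup fun p => (p.1 : α) \ p.2}

variable {L : Set α} {x y : α}

theorem Set.Finite.supsOfSdiffs (hL : L.Finite) : (supsOfSdiffs L).Finite := by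
  have : Finite L := hL
  exact (finite_range fun t : Finset (L × L) => t.sup fun p => (p.1 : α) \ p.2).subset
    fun x ⟨t, hx⟩ => ⟨t, hx.symm⟩

theorem sdiff_mem_supsOfSdiffs {a b : α} (ha : a ∈ L) (hb : b ∈ L) :
    a \ b ∈ supsOfSdiffs L :=
  ⟨{(⟨a, ha⟩, ⟨b, hb⟩)}, by simp⟩

theorem subset_supsOfSdiffs (hbot : ⊥ ∈ L) : L ⊆ supsOfSdiffs L := fun a ha => by
  simpa using sdiff_mem_supsOfSdiffs ha hbot

theorem supClosed_supsOfSdiffs : SupClosed (supsOfSdiffs L) := by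
  classical
  rintro _ ⟨t, rfl⟩ _ ⟨u, rfl⟩
  exact ⟨t ∪ u, Finset.sup_union.symm⟩

theorem finsetSup_mem_supsOfSdiffs {ι : Type*} {t : Finset ι} {f : ι → α}
    (hf : ∀ i ∈ t, f i ∈ supsOfSdiffs L) : t.sup f ∈ supsOfSdiffs L :=
  Finset.sup_mem (supsOfSdiffs L) ⟨∅, rfl⟩ (fun _ hx _ hy => supClosed_supsOfSdiffs hx hy) t f hf

namespace IsSublattice

variable (hL : IsSublattice L)
include hL

theorem infClosed_supsOfSdiffs : InfClosed (supsOfSdiffs L) := by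
  rintro _ ⟨t, rfl⟩ _ ⟨u, rfl⟩
  rw [Finset.sup_inf_distrib_right]
  refine finsetSup_mem_supsOfSdiffs fun p _ => ?_
  rw [Finset.sup_inf_distrib_left]
  refine finsetSup_mem_supsOfSdiffs fun q _ => ?_
  rw [sdiff_inf_sdiff_eq]
  exact sdiff_mem_supsOfSdiffs (hL.infClosed p.1.2 q.1.2) (hL.supClosed p.2.2 q.2.2)

theorem sdiff_sdiff_mem_supsOfSdiffs (hx : x ∈ supsOfSdiffs L) {a b : α} (ha : a ∈ L)
    (hb : b ∈ L) : x \ (a \ b) ∈ supsOfSdiffs L := by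
  obtain ⟨t, rfl⟩ := hx
  rw [← Finset.sup_sdiff_right]
  refine finsetSup_mem_supsOfSdiffs fun p _ => ?_
  rw [sdiff_sdiff_sdiff_eq]
  exact supClosed_supsOfSdiffs (sdiff_mem_supsOfSdiffs p.1.2 (hL.supClosed p.2.2 ha))
    (sdiff_mem_supsOfSdiffs (hL.infClosed p.1.2 hb) p.2.2)

theorem sdiff_mem_supsOfSdiffs (hx : x ∈ supsOfSdiffs L) (hy : y ∈ supsOfSdiffs L) :
    x \ y ∈ supsOfSdiffs L := by
  classical
  obtain ⟨u, rfl⟩ := hy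
  induction u using Finset.induction_on with
  | empty => simpa using hx
  | insert p u _ ih =>
    rw [Finset.sup_insert, sdiff_sup]
    exact hL.infClosed_supsOfSdiffs (hL.sdiff_sdiff_mem_supsOfSdiffs hx p.1.2 p.2.2) ih

end IsSublattice

end GeneralizedBooleanAlgebra

theorem ershov_finitely_many_term_functions_general {A : Type*} [GeneralizedBooleanAlgebra A]
    {C : Set A}
    (hC : C.Finite) (n : ℕ) :
    {f : (Fin n → A) → A | IsTermFun C n f}.Finite := by
  set gens : Set ((Fin n → A) → A) :=
    range (fun i v => v i) ∪ (fun c _ => c) '' C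
  have hgens : gens.Finite := (finite_range _).union (hC.image _)
  set L := latticeClosure (insert ⊥ gens)
  have hL : IsSublattice L := isSublattice_latticeClosure
  have gens_subset : gens ⊆ supsOfSdiffs L :=
    (subset_insert _ _).trans <| subset_latticeClosure.trans <|
      subset_supsOfSdiffs (subset_latticeClosure (mem_insert _ _))
  refine (hgens.insert ⊥).latticeClosure.supsOfSdiffs.subset fun f hf => ?_
  induction hf with
  | proj i => exact gens_subset (Or.inl ⟨i, rfl⟩)
  | const hc => exact gens_subset (Or.inr ⟨_, hc, rfl⟩)
  | sup _ _ hf hg => exact supClosed_supsOfSdiffs hf hg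
  | inf _ _ hf hg => exact hL.infClosed_supsOfSdiffs hf hg
  | sdiff _ _ hf hg => exact hL.sdiff_mem_supsOfSdiffs hf hg

theorem ershov_finitely_many_term_functions {A : Type*} [GeneralizedBooleanAlgebra A]
    {C : Set A}
    (hbot : ⊥ ∈ C)
    (hsup : ∀ a ∈ C, ∀ b ∈ C, a ⊔ b ∈ C)
    (hinf : ∀ a ∈ C, ∀ b ∈ C, a ⊓ b ∈ C)
    (hsdiff : ∀ a ∈ C, ∀ b ∈ C, a \ b ∈ C)
    (hC : C.Finite) (n : ℕ) :
    {f : (Fin n → A) → A | IsTermFun C n f}.Finite :=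
  ershov_finitely_many_term_functions_general hC n
end

section
/- A generalized Boolean algebra A is equationally Noetherian over its Ershov subalgebra of constants C if and only if C is finite. That is: (⇐) if C is finite then for every n and every system S of equations in n variables with constants in C there is a finite subset S₀ ⊆ S with the same solution set as S; (⇒) if C is infinite then there exist n and a system S in n variables such that no finite subset of S has the same solution set as S. -/
/-- The solution set of a system of equations in `n` variables. -/
def SolSet {A : Type*} [GeneralizedBooleanAlgebra A] {n : ℕ}
    (S : Set (((Fin n → A) → A) × ((Fin n → A) → A))) : Set (Fin n → A) :=
  {v | ∀ p ∈ S, p.1 v = p.2 v}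

/-- `A` is equationally Noetherian over `C` if every system of equations with
constants in `C` is equivalent to one of its finite subsystems. -/
def EquationallyNoetherian (A : Type*) [GeneralizedBooleanAlgebra A] (C : Set A) : Prop :=
  ∀ (n : ℕ) (S : Set (((Fin n → A) → A) × ((Fin n → A) → A))),
    (∀ p ∈ S, IsTermFun C n p.1 ∧ IsTermFun C n p.2) →
    ∃ S₀ ⊆ S, S₀.Finite ∧ SolSet S₀ = SolSet S

open Set Function

theorem Set.Finite.booleanSubalgebraClosure {α : Type*} [BooleanAlgebra α] {s : Set α}
    (hs : s.Finite) : (BooleanSubalgebra.closure s : Set α).Finite := by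
  set L := _root_.latticeClosure (insert ⊥ (insert ⊤ s))
  have : Finite L := ((hs.insert ⊤).insert ⊥).latticeClosure.to_subtype
  refine (finite_range fun t : Finset (↥L × ↥L) => t.sup fun x => (x.1 : α) \ x.2).subset
    fun a ha => ?_
  have haL : a ∈ BooleanSubalgebra.closure L := by
    rw [BooleanSubalgebra.closure_latticeClosure]
    exact BooleanSubalgebra.closure_mono ((subset_insert _ _).trans (subset_insert _ _)) ha
  obtain ⟨t, rfl⟩ := (BooleanSubalgebra.mem_closure_iff_sup_sdiff isSublattice_latticeClosure
    (subset_latticeClosure (by simp)) (subset_latticeClosure (by simp))).1 haL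
  exact ⟨t, rfl⟩

section SdiffClosed

variable {α : Type*} [GeneralizedBooleanAlgebra α] {s : Set α}

def SdiffClosed (s : Set α) : Prop := ∀ a ∈ s, ∀ b ∈ s, a \ b ∈ s

lemma SdiffClosed.inf_mem (hs : SdiffClosed s) {a b : α} (ha : a ∈ s) (hb : b ∈ s) :
    a ⊓ b ∈ s :=
  _root_.sdiff_sdiff_right_self (x := a) (y := b) ▸ hs a ha _ (hs a ha b hb)

lemma SdiffClosed.inter_Iic (hs : SdiffClosed s) (a : α) : SdiffClosed (s ∩ Iic a) :=
  fun x hx y hy => ⟨hs x hx.1 y hy.1, sdiff_le.trans hx.2⟩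

lemma SdiffClosed.sep_disjoint (hs : SdiffClosed s) (a : α) :
    SdiffClosed {x ∈ s | Disjoint a x} :=
  fun x hx y hy => ⟨hs x hx.1 y hy.1, hx.2.mono_right sdiff_le⟩

lemma SdiffClosed.infinite_inter_Iic_or_sep_disjoint (hs : SdiffClosed s) (hinf : s.Infinite)
    {a : α} (ha : a ∈ s) : (s ∩ Iic a).Infinite ∨ {x ∈ s | Disjoint a x}.Infinite := by
  by_contra h
  simp only [not_or, Set.not_infinite] at h
  refine hinf (Finite.of_finite_image (f := fun x => (x ⊓ a, x \ a))
    ((h.1.prod h.2).subset ?_) fun x _ y _ hxy => ?_)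
  · rintro _ ⟨x, hx, rfl⟩
    exact ⟨⟨hs.inf_mem hx ha, inf_le_right⟩, hs x hx a ha, disjoint_sdiff_self_right⟩
  · obtain ⟨h₁, h₂⟩ := Prod.mk.injEq _ _ _ _ ▸ hxy
    rw [← sup_inf_sdiff x a, h₁, h₂, sup_inf_sdiff]

lemma SdiffClosed.exists_disjoint_infinite (hs : SdiffClosed s) (hinf : s.Infinite) :
    ∃ c ∈ s, c ≠ ⊥ ∧ ∃ t ⊆ s, SdiffClosed t ∧ t.Infinite ∧ ∀ x ∈ t, Disjoint c x := by
  by_cases h : ∃ a ∈ s, a ≠ ⊥ ∧ (s ∩ Iic a).Finite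
  · obtain ⟨a, ha, ha0, hfin⟩ := h
    exact ⟨a, ha, ha0, _, sep_subset _ _, hs.sep_disjoint a,
      (hs.infinite_inter_Iic_or_sep_disjoint hinf ha).resolve_left fun h => h hfin,
      fun x hx => hx.2⟩
  · push Not at h
    obtain ⟨a, ha, ha0⟩ := (hinf.sdiff (finite_singleton ⊥)).nonempty
    obtain ⟨b, ⟨hb, hba⟩, hb'⟩ := ((h a ha ha0).sdiff (toFinite {⊥, a})).nonempty
    simp only [mem_insert_iff, mem_singleton_iff, not_or] at hb'
    refine ⟨a \ b, hs a ha b hb, fun hab => hb'.2 (le_antisymm hba (sdiff_eq_bot_iff.1 hab)),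
      s ∩ Iic b, inter_subset_left, hs.inter_Iic b, h b hb hb'.1,
      fun x hx => disjoint_sdiff_self_left.mono_right hx.2⟩

lemma SdiffClosed.exists_pairwise_disjoint (hs : SdiffClosed s) (hinf : s.Infinite) :
    ∃ c : ℕ → α, (∀ k, c k ∈ s) ∧ (∀ k, c k ≠ ⊥) ∧ Pairwise (Disjoint on c) := by
  have step : ∀ t : Set α, ∃ (c : α) (t' : Set α), SdiffClosed t → t.Infinite →
      c ∈ t ∧ c ≠ ⊥ ∧ t' ⊆ t ∧ SdiffClosed t' ∧ t'.Infinite ∧ ∀ x ∈ t', Disjoint c x := by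
    intro t
    by_cases ht : SdiffClosed t ∧ t.Infinite
    · obtain ⟨c, hc, hc0, t', ht', h⟩ := ht.1.exists_disjoint_infinite ht.2
      exact ⟨c, t', fun _ _ => ⟨hc, hc0, ht', h⟩⟩
    · exact ⟨⊥, ∅, fun h₁ h₂ => (ht ⟨h₁, h₂⟩).elim⟩
  choose c next hmem hne hsub hclosed hinf' hdisj using step
  let T : ℕ → Set α := fun k => Nat.rec s (fun _ t => next t) k
  have hT : ∀ k, SdiffClosed (T k) ∧ (T k).Infinite := by
    intro k
    induction k with
    | zero => exact ⟨hs, hinf⟩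
    | succ k ih => exact ⟨hclosed _ ih.1 ih.2, hinf' _ ih.1 ih.2⟩
  have hanti : Antitone T := antitone_nat_of_succ_le fun k => hsub _ (hT k).1 (hT k).2
  have hmemT k : c (T k) ∈ T k := hmem _ (hT k).1 (hT k).2
  refine ⟨fun k => c (T k), fun k => hanti (Nat.zero_le k) (hmemT k),
    fun k => hne _ (hT k).1 (hT k).2, (pairwise_disjoint_on _).2 fun j k hjk =>
      hdisj _ (hT j).1 (hT j).2 _ (hanti hjk (hmemT k))⟩

end SdiffClosed

section TermFunctions

variable {A : Type*} [GeneralizedBooleanAlgebra A] {C : Set A} {n : ℕ}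

lemma IsTermFun.lift_comp_mem_closure {f : (Fin n → A) → A} (hf : IsTermFun C n f) :
    Booleanisation.lift ∘ f ∈ BooleanSubalgebra.closure
      (range (fun i (v : Fin n → A) => Booleanisation.lift (v i)) ∪
        (fun c _ => Booleanisation.lift c) '' C) := by
  induction hf with
  | proj i => exact BooleanSubalgebra.subset_closure (Or.inl ⟨i, rfl⟩)
  | const hc => exact BooleanSubalgebra.subset_closure (Or.inr ⟨_, hc, rfl⟩)
  | sup _ _ hf hg => exact BooleanSubalgebra.sup_mem hf hg
  | inf _ _ hf hg => exact BooleanSubalgebra.inf_mem hf hg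
  | sdiff _ _ hf hg => exact BooleanSubalgebra.sdiff_mem hf hg

lemma finite_setOf_isTermFun (hC : C.Finite) (n : ℕ) : {f | IsTermFun C n f}.Finite :=
  (((finite_range _).union (hC.image _)).booleanSubalgebraClosure.preimage
    Booleanisation.liftLatticeHom_injective.comp_left.injOn).subset
    fun _ hf => IsTermFun.lift_comp_mem_closure hf

lemma EquationallyNoetherian.of_finite (hC : C.Finite) : EquationallyNoetherian A C :=
  fun n S hS => ⟨S, subset_rfl,
    ((finite_setOf_isTermFun hC n).prod (finite_setOf_isTermFun hC n)).subset hS, rfl⟩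

lemma not_equationallyNoetherian_of_forall_solves_iff_ne
    (e : ℕ → ((Fin n → A) → A) × ((Fin n → A) → A))
    (he : ∀ k, IsTermFun C n (e k).1 ∧ IsTermFun C n (e k).2) (v : ℕ → Fin n → A)
    (hv : ∀ m k, (e k).1 (v m) = (e k).2 (v m) ↔ k ≠ m) : ¬ EquationallyNoetherian A C := by
  intro hN
  obtain ⟨S₀, hS₀, hfin, hsol⟩ := hN n (range e) (forall_mem_range.2 he)
  have he_inj : Function.Injective e := fun j k hjk => by
    by_contra hne
    exact (hv j j).1 (hjk ▸ (hv j k).2 (Ne.symm hne)) rfl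
  obtain ⟨_, ⟨m, rfl⟩, hm⟩ := ((infinite_range_of_injective he_inj).sdiff hfin).nonempty
  have hsolves : v m ∈ SolSet S₀ := fun p hp => by
    obtain ⟨k, rfl⟩ := hS₀ hp
    exact (hv m k).2 fun hkm => hm (hkm ▸ hp)
  rw [hsol] at hsolves
  exact (hv m m).1 (hsolves _ (mem_range_self m)) rfl

lemma not_equationallyNoetherian_of_pairwise_disjoint {c : ℕ → A} (hcC : ∀ k, c k ∈ C)
    (hc : ∀ k, c k ≠ ⊥) (hdisj : Pairwise (Disjoint on c)) : ¬ EquationallyNoetherian A C := by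
  refine not_equationallyNoetherian_of_forall_solves_iff_ne (n := 1)
    (fun k => (fun v => v 0 \ c k, fun v => v 0))
    (fun k => ⟨.sdiff (.proj 0) (.const (hcC k)), .proj 0⟩) (fun m _ => c m) fun m k => ?_
  refine ⟨fun h hkm => hc m ?_, fun hkm => (hdisj hkm.symm).sdiff_eq_left⟩
  subst hkm
  simpa using h.symm

end TermFunctions

theorem ershov_equationally_noetherian_iff_general {A : Type*} [GeneralizedBooleanAlgebra A]
    {C : Set A}
    (hsdiff : ∀ a ∈ C, ∀ b ∈ C, a \ b ∈ C) :
    EquationallyNoetherian A C ↔ C.Finite := by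
  refine ⟨fun hN => ?_, EquationallyNoetherian.of_finite⟩
  by_contra hC
  obtain ⟨c, hcC, hc0, hdisj⟩ := SdiffClosed.exists_pairwise_disjoint hsdiff hC
  exact not_equationallyNoetherian_of_pairwise_disjoint hcC hc0 hdisj hN

theorem ershov_equationally_noetherian_iff {A : Type*} [GeneralizedBooleanAlgebra A]
    {C : Set A}
    (hbot : ⊥ ∈ C)
    (hsup : ∀ a ∈ C, ∀ b ∈ C, a ⊔ b ∈ C)
    (hinf : ∀ a ∈ C, ∀ b ∈ C, a ⊓ b ∈ C)
    (hsdiff : ∀ a ∈ C, ∀ b ∈ C, a \ b ∈ C) :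
    EquationallyNoetherian A C ↔ C.Finite :=
  ershov_equationally_noetherian_iff_general hsdiff
end

section
/- Let A be a generalized Boolean algebra that is weak equationally Noetherian over its Ershov subalgebra of constants C. Then for every subset D ⊆ C that has no upper bound in A, there exists c ∈ C such that {x ∈ A | ∀ d ∈ D, x ⊓ d = ⊥} = {x ∈ A | x ≤ c}. -/
/-- `A` is weak equationally Noetherian over `C` if every system of equations with
constants in `C` is equivalent to some finite system (in the same variables). -/
def WeakEquationallyNoetherian (A : Type*) [GeneralizedBooleanAlgebra A] (C : Set A) : Prop :=
  ∀ (n : ℕ) (S : Set (((Fin n → A) → A) × ((Fin n → A) → A))),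
    (∀ p ∈ S, IsTermFun C n p.1 ∧ IsTermFun C n p.2) →
    ∃ S' : Set (((Fin n → A) → A) × ((Fin n → A) → A)),
      S'.Finite ∧ (∀ p ∈ S', IsTermFun C n p.1 ∧ IsTermFun C n p.2) ∧
      SolSet S' = SolSet S

/-!
A unary `C`-term `f` satisfies `f x \ x = f ⊥ \ x`, and `x ⊓ f x` is either `x ⊓ a` for all `x` or
`x \ a` for all `x`, for one `a ∈ C`. Hence an equation satisfied by `⊥` has solution set
`{x | Disjoint x a}` or `Iic a`, and finite intersections of such sets keep that shape. The elements
orthogonal to `D` are the solutions of the system `{x ⊓ d = ⊥ | d ∈ D}`, so by weak Noetherianity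
they form a set of that shape; it cannot be `{x | Disjoint x a}`, since then every `d \ a` with
`d ∈ D` would be orthogonal to `d`, making `a` an upper bound of `D`.
-/

open scoped symmDiff

section

variable {A : Type*} [GeneralizedBooleanAlgebra A] {C : Set A}

theorem IsTermFun.map_eq_of_forall_map_eq {n : ℕ} {f : (Fin n → A) → A} (hf : IsTermFun C n f)
    {φ : A → A} (map_sup : ∀ a b, φ (a ⊔ b) = φ a ⊔ φ b) (map_inf : ∀ a b, φ (a ⊓ b) = φ a ⊓ φ b)
    (map_sdiff : ∀ a b, φ (a \ b) = φ a \ φ b) {v w : Fin n → A} (hvw : ∀ i, φ (v i) = φ (w i)) :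
    φ (f v) = φ (f w) := by
  induction hf with
  | proj i => exact hvw i
  | const => rfl
  | sup _ _ ihf ihg => rw [map_sup, map_sup, ihf, ihg]
  | inf _ _ ihf ihg => rw [map_inf, map_inf, ihf, ihg]
  | sdiff _ _ ihf ihg => rw [map_sdiff, map_sdiff, ihf, ihg]

theorem IsTermFun.apply_sdiff_eq_apply_bot_sdiff {n : ℕ} {f : (Fin n → A) → A}
    (hf : IsTermFun C n f) {v : Fin n → A} {x : A} (hv : ∀ i, v i ≤ x) :
    f v \ x = f ⊥ \ x :=
  hf.map_eq_of_forall_map_eq (φ := (· \ x)) (fun _ _ => sup_sdiff) (fun _ _ => inf_sdiff)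
    (fun _ _ => by
      rw [sdiff_sdiff_right', inf_sdiff_self_left, sup_bot_eq, sdiff_right_comm])
    fun i => by rw [sdiff_eq_bot_iff.2 (hv i), Pi.bot_apply, bot_sdiff]

variable (C) in
def IsInfOrSdiff (G : A → A) : Prop :=
  ∃ a ∈ C, G = (· ⊓ a) ∨ G = (· \ a)

namespace IsInfOrSdiff

variable {G H : A → A}

theorem le (hG : IsInfOrSdiff C G) : G ≤ id := by
  obtain ⟨a, -, rfl | rfl⟩ := hG
  exacts [fun _ => inf_le_left, fun _ => sdiff_le]

theorem id_sdiff (hG : IsInfOrSdiff C G) : IsInfOrSdiff C (id \ G) := by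
  obtain ⟨a, ha, rfl | rfl⟩ := hG
  · exact ⟨a, ha, .inr (funext fun x => sdiff_inf_self_left x a)⟩
  · exact ⟨a, ha, .inl (funext fun _ => sdiff_sdiff_right_self)⟩

theorem inf (hsup : ∀ a ∈ C, ∀ b ∈ C, a ⊔ b ∈ C) (hinf : ∀ a ∈ C, ∀ b ∈ C, a ⊓ b ∈ C)
    (hsdiff : ∀ a ∈ C, ∀ b ∈ C, a \ b ∈ C) (hG : IsInfOrSdiff C G) (hH : IsInfOrSdiff C H) :
    IsInfOrSdiff C (G ⊓ H) := by
  have inf_sdiff_eq (x a b : A) : x ⊓ a ⊓ x \ b = x ⊓ (a \ b) := by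
    rw [← inf_sdiff_assoc, inf_right_comm, inf_idem, inf_sdiff_assoc]
  obtain ⟨a, ha, rfl | rfl⟩ := hG <;> obtain ⟨b, hb, rfl | rfl⟩ := hH
  · exact ⟨a ⊓ b, hinf a ha b hb, .inl (funext fun x => (inf_inf_distrib_left x a b).symm)⟩
  · exact ⟨a \ b, hsdiff a ha b hb, .inl (funext fun x => inf_sdiff_eq x a b)⟩
  · exact ⟨b \ a, hsdiff b hb a ha,
      .inl (funext fun x => (inf_comm _ _).trans (inf_sdiff_eq x b a))⟩
  · exact ⟨a ⊔ b, hsup a ha b hb, .inr (funext fun _ => sdiff_sup.symm)⟩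

-- `id \ ·` is complementation in each `Set.Iic x`, so `\` and `⊔` reduce to `⊓`.
theorem sdiff (hsup : ∀ a ∈ C, ∀ b ∈ C, a ⊔ b ∈ C) (hinf : ∀ a ∈ C, ∀ b ∈ C, a ⊓ b ∈ C)
    (hsdiff : ∀ a ∈ C, ∀ b ∈ C, a \ b ∈ C) (hG : IsInfOrSdiff C G) (hH : IsInfOrSdiff C H) :
    IsInfOrSdiff C (G \ H) := by
  rw [← inf_of_le_left hG.le, inf_sdiff_assoc]
  exact hG.inf hsup hinf hsdiff hH.id_sdiff

theorem sup (hsup : ∀ a ∈ C, ∀ b ∈ C, a ⊔ b ∈ C) (hinf : ∀ a ∈ C, ∀ b ∈ C, a ⊓ b ∈ C)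
    (hsdiff : ∀ a ∈ C, ∀ b ∈ C, a \ b ∈ C) (hG : IsInfOrSdiff C G) (hH : IsInfOrSdiff C H) :
    IsInfOrSdiff C (G ⊔ H) := by
  rw [← inf_of_le_right (sup_le hG.le hH.le), ← sdiff_sdiff_right_self, sdiff_sup]
  exact (hG.id_sdiff.inf hsup hinf hsdiff hH.id_sdiff).id_sdiff

end IsInfOrSdiff

theorem IsTermFun.isInfOrSdiff_inf_apply (hbot : ⊥ ∈ C) (hsup : ∀ a ∈ C, ∀ b ∈ C, a ⊔ b ∈ C)
    (hinf : ∀ a ∈ C, ∀ b ∈ C, a ⊓ b ∈ C) (hsdiff : ∀ a ∈ C, ∀ b ∈ C, a \ b ∈ C)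
    {f : (Fin 1 → A) → A} (hf : IsTermFun C 1 f) :
    IsInfOrSdiff C (fun x => x ⊓ f fun _ => x) := by
  induction hf with
  | proj => exact ⟨⊥, hbot, .inr (funext fun x => by rw [inf_idem, sdiff_bot])⟩
  | const hc => exact ⟨_, hc, .inl rfl⟩
  | sup _ _ ihf ihg =>
    convert ihf.sup hsup hinf hsdiff ihg using 1
    exact funext fun x => inf_sup_left _ _ _
  | inf _ _ ihf ihg =>
    convert ihf.inf hsup hinf hsdiff ihg using 1
    exact funext fun x => inf_inf_distrib_left _ _ _
  | sdiff _ _ ihf ihg =>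
    convert ihf.sdiff hsup hinf hsdiff ihg using 1
    exact funext fun x => inf_sdiff_distrib_left _ _ _

variable (C) in
def IsDisjointOrIic (T : Set A) : Prop :=
  ∃ a ∈ C, T = {x | Disjoint x a} ∨ T = Set.Iic a

theorem isDisjointOrIic_univ (hbot : ⊥ ∈ C) : IsDisjointOrIic C Set.univ :=
  ⟨⊥, hbot, .inl (by simp)⟩

theorem IsDisjointOrIic.inter (hsup : ∀ a ∈ C, ∀ b ∈ C, a ⊔ b ∈ C)
    (hinf : ∀ a ∈ C, ∀ b ∈ C, a ⊓ b ∈ C) (hsdiff : ∀ a ∈ C, ∀ b ∈ C, a \ b ∈ C)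
    {T U : Set A} (hT : IsDisjointOrIic C T) (hU : IsDisjointOrIic C U) :
    IsDisjointOrIic C (T ∩ U) := by
  obtain ⟨a, ha, rfl | rfl⟩ := hT <;> obtain ⟨b, hb, rfl | rfl⟩ := hU
  · exact ⟨a ⊔ b, hsup a ha b hb, .inl (by ext; simp)⟩
  · exact ⟨b \ a, hsdiff b hb a ha, .inr (by ext; simp [le_sdiff, and_comm])⟩
  · exact ⟨a \ b, hsdiff a ha b hb, .inr (by ext; simp [le_sdiff])⟩
  · exact ⟨a ⊓ b, hinf a ha b hb, .inr (by ext; simp)⟩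

theorem IsInfOrSdiff.isDisjointOrIic_setOf_eq_bot {G : A → A} (hG : IsInfOrSdiff C G) :
    IsDisjointOrIic C {x | G x = ⊥} := by
  obtain ⟨a, ha, rfl | rfl⟩ := hG
  · exact ⟨a, ha, .inl (by simp only [disjoint_iff])⟩
  · exact ⟨a, ha, .inr (by simp only [sdiff_eq_bot_iff]; rfl)⟩

theorem IsTermFun.isDisjointOrIic_setOf_eq (hbot : ⊥ ∈ C)
    (hsup : ∀ a ∈ C, ∀ b ∈ C, a ⊔ b ∈ C) (hinf : ∀ a ∈ C, ∀ b ∈ C, a ⊓ b ∈ C)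
    (hsdiff : ∀ a ∈ C, ∀ b ∈ C, a \ b ∈ C) {f g : (Fin 1 → A) → A}
    (hf : IsTermFun C 1 f) (hg : IsTermFun C 1 g) (h_bot : f ⊥ = g ⊥) :
    IsDisjointOrIic C {x | f (fun _ => x) = g (fun _ => x)} := by
  have hfg : IsTermFun C 1 fun v => f v ∆ g v := .sup (.sdiff hf hg) (.sdiff hg hf)
  suffices ∀ x, f (fun _ => x) = g (fun _ => x) ↔ x ⊓ (f (fun _ => x) ∆ g fun _ => x) = ⊥ by
    simpa only [this] using
      (hfg.isInfOrSdiff_inf_apply hbot hsup hinf hsdiff).isDisjointOrIic_setOf_eq_bot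
  intro x
  have h_out : (f (fun _ => x) ∆ g fun _ => x) \ x = ⊥ := by
    rw [hfg.apply_sdiff_eq_apply_bot_sdiff fun _ => le_rfl, h_bot, symmDiff_self, bot_sdiff]
  rw [← symmDiff_eq_bot]
  nth_rw 1 [← sup_inf_sdiff (_ ∆ _) x]
  rw [h_out, sup_bot_eq, inf_comm]

theorem Set.Finite.isDisjointOrIic_biInter (hbot : ⊥ ∈ C)
    (hsup : ∀ a ∈ C, ∀ b ∈ C, a ⊔ b ∈ C) (hinf : ∀ a ∈ C, ∀ b ∈ C, a ⊓ b ∈ C)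
    (hsdiff : ∀ a ∈ C, ∀ b ∈ C, a \ b ∈ C) {ι : Type*} {S : Set ι} (hfin : S.Finite)
    {T : ι → Set A} (hT : ∀ i ∈ S, IsDisjointOrIic C (T i)) :
    IsDisjointOrIic C (⋂ i ∈ S, T i) := by
  induction S, hfin using Set.Finite.induction_on with
  | empty => simpa using isDisjointOrIic_univ hbot
  | @insert i S _ _ ih =>
    rw [Set.biInter_insert]
    exact (hT i (S.mem_insert i)).inter hsup hinf hsdiff
      (ih fun j hj => hT j (Set.mem_insert_of_mem i hj))

theorem isDisjointOrIic_setOf_mem_solSet (hbot : ⊥ ∈ C)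
    (hsup : ∀ a ∈ C, ∀ b ∈ C, a ⊔ b ∈ C) (hinf : ∀ a ∈ C, ∀ b ∈ C, a ⊓ b ∈ C)
    (hsdiff : ∀ a ∈ C, ∀ b ∈ C, a \ b ∈ C) {S : Set (((Fin 1 → A) → A) × ((Fin 1 → A) → A))}
    (hfin : S.Finite) (hS : ∀ p ∈ S, IsTermFun C 1 p.1 ∧ IsTermFun C 1 p.2)
    (h_bot : ⊥ ∈ SolSet S) :
    IsDisjointOrIic C {x | (fun _ => x) ∈ SolSet S} := by
  have h_eq :
      {x | (fun _ => x) ∈ SolSet S} = ⋂ p ∈ S, {x | p.1 (fun _ => x) = p.2 fun _ => x} := by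
    ext; simp [SolSet]
  rw [h_eq]
  exact hfin.isDisjointOrIic_biInter hbot hsup hinf hsdiff fun p hp =>
    (hS p hp).1.isDisjointOrIic_setOf_eq hbot hsup hinf hsdiff (hS p hp).2 (h_bot p hp)

theorem bddAbove_of_setOf_inf_eq_bot_eq {D : Set A} {a : A}
    (h : {x | ∀ d ∈ D, x ⊓ d = ⊥} = {x | Disjoint x a}) : BddAbove D := by
  refine ⟨a, fun d hd => ?_⟩
  have h_orth : d \ a ∈ {x | ∀ d ∈ D, x ⊓ d = ⊥} := h ▸ disjoint_sdiff_self_left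
  have h_bot : d \ a ⊓ d = ⊥ := h_orth d hd
  rwa [inf_eq_left.2 sdiff_le, sdiff_eq_bot_iff] at h_bot

end

theorem ershov_weakNoetherian_unbounded {A : Type*} [GeneralizedBooleanAlgebra A]
    {C : Set A}
    (hbot : ⊥ ∈ C)
    (hsup : ∀ a ∈ C, ∀ b ∈ C, a ⊔ b ∈ C)
    (hinf : ∀ a ∈ C, ∀ b ∈ C, a ⊓ b ∈ C)
    (hsdiff : ∀ a ∈ C, ∀ b ∈ C, a \ b ∈ C)
    (hW : WeakEquationallyNoetherian A C) :
    ∀ D ⊆ C, ¬ BddAbove D →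
      ∃ c ∈ C, {x : A | ∀ d ∈ D, x ⊓ d = ⊥} = {x : A | x ≤ c} := by
  intro D hD hD_unbdd
  let S : Set (((Fin 1 → A) → A) × ((Fin 1 → A) → A)) :=
    (fun d => (fun v => v 0 ⊓ d, fun _ => ⊥)) '' D
  have hS : ∀ p ∈ S, IsTermFun C 1 p.1 ∧ IsTermFun C 1 p.2 := by
    rintro _ ⟨d, hd, rfl⟩
    exact ⟨.inf (.proj 0) (.const (hD hd)), .const hbot⟩
  obtain ⟨S', hS'_fin, hS', hS'_sol⟩ := hW 1 S hS
  have h_orth : {x : A | ∀ d ∈ D, x ⊓ d = ⊥} = {x | (fun _ => x) ∈ SolSet S'} := by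
    rw [hS'_sol]
    ext x
    simp [SolSet, S]
  have h_bot : ⊥ ∈ SolSet S' := by
    rw [hS'_sol]
    simp [SolSet, S]
  obtain ⟨c, hc, h_disj | h_Iic⟩ :=
    isDisjointOrIic_setOf_mem_solSet hbot hsup hinf hsdiff hS'_fin hS' h_bot
  · exact (hD_unbdd (bddAbove_of_setOf_inf_eq_bot_eq (h_orth.trans h_disj))).elim
  · exact ⟨c, hc, h_orth.trans h_Iic⟩
end

section
/- Let A be a generalized Boolean algebra that is weak equationally Noetherian over its Ershov subalgebra of constants C. Then every subset D ⊆ C that has an upper bound in A has a least upper bound in A, and this least upper bound belongs to C; i.e. there exists d ∈ C with IsLUB D d. -/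
/-!
Term functions are local: if two inputs agree below `e`, so do the outputs. Hence for a
one-variable equation `f x = g x`, with `φ x := f x ∆ g x`, the solutions are exactly the `x`
with `φ x = ⊥`, and locality pins these down on any interval `[⊥, y]` with `y` a solution:
`x ≤ y` solves the equation iff `φ ⊥ ≤ x`, where `φ ⊥ ∈ C`. The upper bounds of `D ⊆ C` are the
solutions of the system `{x ⊔ c = x | c ∈ D}`; replacing it by an equivalent finite system and
fixing one upper bound `u`, the join `d ∈ C` of the finitely many constants `φ ⊥` lies below
every upper bound and, being below `u`, is itself an upper bound.
-/

open scoped symmDiff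

section Local

variable {A : Type*} [GeneralizedBooleanAlgebra A]

def IsLocal (φ : A → A) : Prop :=
  ∀ ⦃x y e : A⦄, x ⊓ e = y ⊓ e → φ x ⊓ e = φ y ⊓ e

variable {φ ψ : A → A}

theorem IsLocal.symmDiff (hφ : IsLocal φ) (hψ : IsLocal ψ) : IsLocal fun x => φ x ∆ ψ x :=
  fun _ _ _ h => by simp only [inf_symmDiff_distrib_right, hφ h, hψ h]

theorem IsLocal.le_of_eq_bot (hφ : IsLocal φ) {x : A} (hx : φ x = ⊥) : φ ⊥ ≤ x := by
  have h : φ ⊥ ⊓ φ ⊥ \ x = φ x ⊓ φ ⊥ \ x := hφ (by rw [bot_inf_eq, inf_sdiff_self_right])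
  rwa [inf_sdiff_right, hx, bot_inf_eq, sdiff_eq_bot_iff] at h

theorem IsLocal.eq_bot_of_le (hφ : IsLocal φ) {x y : A} (hxy : x ≤ y) (hy : φ y = ⊥)
    (hx : φ ⊥ ≤ x) : φ x = ⊥ := by
  have below : φ x ⊓ x = ⊥ := by
    rw [hφ (y := y) (by rw [inf_idem, inf_eq_right.2 hxy]), hy, bot_inf_eq]
  have outside : φ x \ x = ⊥ := by
    have h : φ x ⊓ φ x \ x = φ ⊥ ⊓ φ x \ x := hφ (by rw [bot_inf_eq, inf_sdiff_self_right])
    rw [← inf_sdiff_right, h]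
    exact le_bot_iff.1 ((inf_le_inf_right _ hx).trans_eq inf_sdiff_self_right)
  rw [← sup_inf_sdiff (φ x) x, below, outside, sup_bot_eq]

end Local

namespace IsTermFun

variable {A : Type*} [GeneralizedBooleanAlgebra A] {C : Set A} {n : ℕ} {f g : (Fin n → A) → A}

theorem inf_congr (hf : IsTermFun C n f) {v w : Fin n → A} {e : A}
    (h : ∀ i, v i ⊓ e = w i ⊓ e) : f v ⊓ e = f w ⊓ e := by
  induction hf with
  | proj i => exact h i
  | const => rfl
  | @sup f g _ _ ihf ihg => rw [inf_sup_right, inf_sup_right (f w), ihf, ihg]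
  | @inf f g _ _ ihf ihg => rw [inf_inf_distrib_right, inf_inf_distrib_right (f w), ihf, ihg]
  | @sdiff f g _ _ ihf ihg =>
    rw [inf_sdiff_distrib_right, inf_sdiff_distrib_right (f w), ihf, ihg]

theorem isLocal_symmDiff (hf : IsTermFun C n f) (hg : IsTermFun C n g) :
    IsLocal fun x => f (fun _ => x) ∆ g (fun _ => x) :=
  IsLocal.symmDiff (fun _ _ _ h => hf.inf_congr fun _ => h)
    (fun _ _ _ h => hg.inf_congr fun _ => h)

theorem apply_mem (hsup : ∀ a ∈ C, ∀ b ∈ C, a ⊔ b ∈ C) (hinf : ∀ a ∈ C, ∀ b ∈ C, a ⊓ b ∈ C)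
    (hsdiff : ∀ a ∈ C, ∀ b ∈ C, a \ b ∈ C) (hf : IsTermFun C n f) {v : Fin n → A}
    (hv : ∀ i, v i ∈ C) : f v ∈ C := by
  induction hf with
  | proj i => exact hv i
  | const hc => exact hc
  | sup _ _ ihf ihg => exact hsup _ ihf _ ihg
  | inf _ _ ihf ihg => exact hinf _ ihf _ ihg
  | sdiff _ _ ihf ihg => exact hsdiff _ ihf _ ihg

theorem symmDiff_apply_mem (hsup : ∀ a ∈ C, ∀ b ∈ C, a ⊔ b ∈ C)
    (hinf : ∀ a ∈ C, ∀ b ∈ C, a ⊓ b ∈ C) (hsdiff : ∀ a ∈ C, ∀ b ∈ C, a \ b ∈ C)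
    (hf : IsTermFun C n f) (hg : IsTermFun C n g) {v : Fin n → A} (hv : ∀ i, v i ∈ C) :
    f v ∆ g v ∈ C :=
  (hf.sdiff hg).sup (hg.sdiff hf) |>.apply_mem hsup hinf hsdiff hv

end IsTermFun

theorem ershov_weakNoetherian_lub {A : Type*} [GeneralizedBooleanAlgebra A]
    {C : Set A}
    (hbot : ⊥ ∈ C)
    (hsup : ∀ a ∈ C, ∀ b ∈ C, a ⊔ b ∈ C)
    (hinf : ∀ a ∈ C, ∀ b ∈ C, a ⊓ b ∈ C)
    (hsdiff : ∀ a ∈ C, ∀ b ∈ C, a \ b ∈ C)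
    (hW : WeakEquationallyNoetherian A C) :
    ∀ D ⊆ C, BddAbove D → ∃ d ∈ C, IsLUB D d := by
  intro D hD ⟨u, hu⟩
  obtain ⟨S, hfin, hterm, hsol⟩ := hW 1 ((fun c => ((· 0 ⊔ c), (· 0))) '' D) <| by
    rintro _ ⟨c, hc, rfl⟩
    exact ⟨.sup (.proj 0) (.const (hD hc)), .proj 0⟩
  have solves_iff (x : A) : (fun _ => x) ∈ SolSet S ↔ x ∈ upperBounds D := by
    rw [hsol]
    exact ⟨fun h c hc => sup_eq_left.1 (h _ ⟨c, hc, rfl⟩),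
      fun h _ ⟨c, hc, hp⟩ => hp ▸ sup_eq_left.2 (h hc)⟩
  let φ (p : ((Fin 1 → A) → A) × ((Fin 1 → A) → A)) (x : A) :=
    p.1 (fun _ => x) ∆ p.2 (fun _ => x)
  have hφ {p} (hp : p ∈ S) : IsLocal (φ p) := (hterm p hp).1.isLocal_symmDiff (hterm p hp).2
  let d := hfin.toFinset.sup (φ · ⊥)
  have hdC : d ∈ C := Finset.sup_induction hbot hsup fun p hp =>
    have hp := hfin.mem_toFinset.1 hp
    (hterm p hp).1.symmDiff_apply_mem hsup hinf hsdiff (hterm p hp).2 fun _ => hbot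
  have hle (x : A) (hx : x ∈ upperBounds D) : d ≤ x := Finset.sup_le fun p hp =>
    (hφ (hfin.mem_toFinset.1 hp)).le_of_eq_bot <|
      symmDiff_eq_bot.2 ((solves_iff x).2 hx p (hfin.mem_toFinset.1 hp))
  refine ⟨d, hdC, (solves_iff d).1 fun p hp => symmDiff_eq_bot.1 ?_, hle⟩
  exact (hφ hp).eq_bot_of_le (hle u hu) (symmDiff_eq_bot.2 ((solves_iff u).2 hu p hp))
    (Finset.le_sup (f := (φ · ⊥)) (hfin.mem_toFinset.2 hp))
end

section
/- A generalized Boolean algebra A is weak equationally Noetherian over its Ershov subalgebra of constants C if and only if both of the following hold: (1) every subset D ⊆ C that has an upper bound in A has a least upper bound in A belonging to C (there exists d ∈ C with IsLUB D d); and (2) for every subset D ⊆ C with no upper bound in A there exists c ∈ C such that {x ∈ A | ∀ d ∈ D, x ⊓ d = ⊥} = {x ∈ A | x ≤ c}. -/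
section

open Booleanisation Finset
open scoped symmDiff

variable {A : Type*} [GeneralizedBooleanAlgebra A] {C : Set A} {n : ℕ}

structure IsErshovSubalgebra (C : Set A) : Prop where
  bot_mem : ⊥ ∈ C
  sup_mem : ∀ a ∈ C, ∀ b ∈ C, a ⊔ b ∈ C
  inf_mem : ∀ a ∈ C, ∀ b ∈ C, a ⊓ b ∈ C
  sdiff_mem : ∀ a ∈ C, ∀ b ∈ C, a \ b ∈ C

def LUBClosed (C : Set A) : Prop :=
  ∀ D ⊆ C, BddAbove D → ∃ d ∈ C, IsLUB D d

def UnbddAnnihilatorPrincipal (C : Set A) : Prop :=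
  ∀ D ⊆ C, ¬ BddAbove D → ∃ c ∈ C, {x : A | ∀ d ∈ D, x ⊓ d = ⊥} = {x : A | x ≤ c}

namespace IsTermFun

variable {f g : (Fin n → A) → A}

lemma symmDiff (hf : IsTermFun C n f) (hg : IsTermFun C n g) :
    IsTermFun C n fun v => f v ∆ g v := by
  simp only [symmDiff_def]
  exact (hf.sdiff hg).sup (hg.sdiff hf)

lemma finsetSup (hbot : ⊥ ∈ C) (s : Finset (Fin n)) : IsTermFun C n fun v => s.sup v := by
  classical
  induction s using Finset.induction_on with
  | empty => simpa only [sup_empty] using const hbot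
  | insert i s _ ih => simpa only [sup_insert] using (proj i).sup ih

lemma apply_bot_mem (hC : IsErshovSubalgebra C) (hf : IsTermFun C n f) : f ⊥ ∈ C := by
  induction hf with
  | proj i => exact hC.bot_mem
  | const hc => exact hc
  | sup _ _ ihf ihg => exact hC.sup_mem _ ihf _ ihg
  | inf _ _ ihf ihg => exact hC.inf_mem _ ihf _ ihg
  | sdiff _ _ ihf ihg => exact hC.sdiff_mem _ ihf _ ihg

end IsTermFun

def IsFinSolSet (C : Set A) (n : ℕ) (P : Set (Fin n → A)) : Prop :=
  ∃ S : Set (((Fin n → A) → A) × ((Fin n → A) → A)),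
    S.Finite ∧ (∀ p ∈ S, IsTermFun C n p.1 ∧ IsTermFun C n p.2) ∧ SolSet S = P

lemma isFinSolSet_univ : IsFinSolSet C n Set.univ :=
  ⟨∅, Set.finite_empty, by simp, by ext; simp [SolSet]⟩

lemma isFinSolSet_setOf_eq {f g : (Fin n → A) → A} (hf : IsTermFun C n f)
    (hg : IsTermFun C n g) : IsFinSolSet C n {v | f v = g v} :=
  ⟨{(f, g)}, Set.finite_singleton _, by simp [hf, hg], by ext; simp [SolSet]⟩

lemma IsFinSolSet.iInter {ι : Type*} [Finite ι] {P : ι → Set (Fin n → A)}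
    (hP : ∀ i, IsFinSolSet C n (P i)) : IsFinSolSet C n (⋂ i, P i) := by
  choose S hfin hterm hsol using hP
  refine ⟨⋃ i, S i, Set.finite_iUnion hfin, ?_, ?_⟩
  · simp only [Set.mem_iUnion]
    rintro p ⟨i, hp⟩
    exact hterm i p hp
  · ext v
    simp only [← hsol, SolSet, Set.mem_iUnion, Set.mem_iInter]
    exact ⟨fun h i p hp => h p ⟨i, hp⟩, fun h p ⟨i, hp⟩ => h i p hp⟩

lemma IsFinSolSet.inter {P Q : Set (Fin n → A)} (hP : IsFinSolSet C n P)
    (hQ : IsFinSolSet C n Q) : IsFinSolSet C n (P ∩ Q) := by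
  rw [Set.inter_eq_iInter]
  exact .iInter fun b => by cases b <;> assumption

namespace Booleanisation

lemma lift_eq_bot_iff {a : A} : lift a = ⊥ ↔ a = ⊥ := by
  rw [← lift_bot]
  exact Sum.inl_injective.eq_iff

lemma disjoint_lift_lift {a b : A} : Disjoint (lift a) (lift b) ↔ Disjoint a b := by
  rw [← le_compl_iff_disjoint_right, compl_lift, lift_le_comp]

lemma disjoint_comp_lift {a b : A} : Disjoint (comp a) (lift b) ↔ b ≤ a := by
  rw [disjoint_comm, ← le_compl_iff_disjoint_right, compl_comp, lift_le_lift]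

lemma comp_finsetSup {ι : Type*} (s : Finset ι) (f : ι → A) :
    comp (s.sup f) = s.inf fun i => comp (f i) := by
  classical
  induction s using Finset.induction_on with
  | empty => simp
  | insert i s _ ih => rw [sup_insert, inf_insert, ← ih, comp_inf_comp]

lemma mem_closure_lift_image (hC : IsErshovSubalgebra C) {x : Booleanisation A}
    (hx : x ∈ BooleanSubalgebra.closure (lift '' C)) : ∃ c ∈ C, x = lift c ∨ x = comp c := by
  induction hx using BooleanSubalgebra.closure_bot_sup_induction with
  | mem x hx =>
    obtain ⟨c, hc, rfl⟩ := hx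
    exact ⟨c, hc, .inl rfl⟩
  | bot => exact ⟨⊥, hC.bot_mem, .inl rfl⟩
  | sup x _ y _ hx hy =>
    obtain ⟨a, ha, rfl | rfl⟩ := hx <;> obtain ⟨b, hb, rfl | rfl⟩ := hy
    · exact ⟨a ⊔ b, hC.sup_mem a ha b hb, .inl rfl⟩
    · exact ⟨b \ a, hC.sdiff_mem b hb a ha, .inr rfl⟩
    · exact ⟨a \ b, hC.sdiff_mem a ha b hb, .inr rfl⟩
    · exact ⟨a ⊓ b, hC.inf_mem a ha b hb, .inr rfl⟩
  | compl x _ hx =>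
    obtain ⟨a, ha, rfl | rfl⟩ := hx
    · exact ⟨a, ha, .inr rfl⟩
    · exact ⟨a, ha, .inl rfl⟩

def literal (a : A) : Bool → Booleanisation A
  | true => lift a
  | false => comp a

def minterm (v : Fin n → A) (σ : Fin n → Bool) : Booleanisation A :=
  univ.inf fun i => literal (v i) (σ i)

lemma minterm_le_literal (v : Fin n → A) (σ : Fin n → Bool) (i : Fin n) :
    minterm v σ ≤ literal (v i) (σ i) :=
  inf_le (mem_univ i)

lemma minterm_false (v : Fin n → A) : minterm v (fun _ => false) = comp (univ.sup v) := by
  rw [comp_finsetSup]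
  rfl

lemma minterm_bot_false : minterm (⊥ : Fin n → A) (fun _ => false) = ⊤ := by
  simp [minterm, literal]

lemma sup_minterm (v : Fin n → A) : univ.sup (minterm v) = ⊤ := by
  classical
  have hcover (a : A) : univ.sup (literal a) = ⊤ := by simp [literal]
  -- distributivity: `⨅ᵢ (vᵢ ⊔ vᵢᶜ) = ⨆_σ ⨅ᵢ ±vᵢ`
  have h := Finset.inf_sup univ (fun _ => univ) fun i => literal (v i)
  simp only [hcover, Finset.inf_top] at h
  refine top_le_iff.1 (h ▸ Finset.sup_le fun g _ => ?_)
  exact Finset.le_sup_of_le (mem_univ fun i => g i (mem_univ i))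
    (Finset.inf_attach univ fun i => literal (v i) (g i (mem_univ i))).le

lemma eq_bot_iff_forall_disjoint_minterm (v : Fin n → A) {x : Booleanisation A} :
    x = ⊥ ↔ ∀ σ, Disjoint x (minterm v σ) := by
  rw [← disjoint_top (a := x), ← sup_minterm v, Finset.disjoint_sup_right]
  simp

end Booleanisation

namespace IsTermFun

variable {f : (Fin n → A) → A}

lemma exists_lift_eq_minterm {σ : Fin n → Bool} {i : Fin n} (hi : σ i = true) :
    ∃ t, IsTermFun C n t ∧ ∀ v, lift (t v) = minterm v σ := by
  classical
  suffices h : ∀ s : Finset (Fin n), ∃ t, IsTermFun C n t ∧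
      ∀ v, lift (t v) = lift (v i) ⊓ s.inf fun j => literal (v j) (σ j) by
    obtain ⟨t, ht, hv⟩ := h univ
    refine ⟨t, ht, fun v => ?_⟩
    have : minterm v σ ≤ lift (v i) := by simpa [hi, literal] using minterm_le_literal v σ i
    rw [hv, ← minterm, inf_eq_right.2 this]
  intro s
  induction s using Finset.induction_on with
  | empty => exact ⟨_, proj i, fun v => by simp⟩
  | insert j s _ ih =>
    obtain ⟨t, ht, hv⟩ := ih
    cases hj : σ j
    · refine ⟨_, ht.sdiff (proj j), fun v => ?_⟩
      rw [inf_insert, hj, inf_left_comm, ← hv, inf_comm, literal, lift_inf_comp]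
    · refine ⟨_, ht.inf (proj j), fun v => ?_⟩
      rw [inf_insert, hj, inf_left_comm, ← hv, inf_comm, literal, lift_inf_lift]

lemma exists_coeff (hf : IsTermFun C n f) :
    ∃ γ : (Fin n → Bool) → Booleanisation A,
      (∀ σ, γ σ ∈ BooleanSubalgebra.closure (lift '' C)) ∧
      ∀ v σ, lift (f v) ⊓ minterm v σ = γ σ ⊓ minterm v σ := by
  induction hf with
  | proj i =>
    refine ⟨fun σ => bif σ i then ⊤ else ⊥, fun σ => ?_, fun v σ => ?_⟩
    · dsimp only
      cases σ i
      exacts [BooleanSubalgebra.bot_mem, BooleanSubalgebra.top_mem]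
    · have hle := minterm_le_literal v σ i
      cases hσ : σ i <;> simp only [hσ, literal, cond_true, cond_false] at hle ⊢
      · simpa using ((disjoint_comp_lift.2 le_rfl).mono_left hle).symm.eq_bot
      · simpa using hle
  | const hc => exact ⟨fun _ => lift _, fun _ => BooleanSubalgebra.subset_closure ⟨_, hc, rfl⟩,
      fun _ _ => rfl⟩
  | sup _ _ ihf ihg =>
    obtain ⟨γ, hγ, hf⟩ := ihf
    obtain ⟨δ, hδ, hg⟩ := ihg
    refine ⟨fun σ => γ σ ⊔ δ σ, fun σ => BooleanSubalgebra.sup_mem (hγ σ) (hδ σ), fun v σ => ?_⟩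
    rw [← lift_sup_lift, inf_sup_right, hf, hg, ← inf_sup_right]
  | inf _ _ ihf ihg =>
    obtain ⟨γ, hγ, hf⟩ := ihf
    obtain ⟨δ, hδ, hg⟩ := ihg
    refine ⟨fun σ => γ σ ⊓ δ σ, fun σ => BooleanSubalgebra.inf_mem (hγ σ) (hδ σ), fun v σ => ?_⟩
    rw [← lift_inf_lift, inf_inf_distrib_right, hf, hg, ← inf_inf_distrib_right]
  | sdiff _ _ ihf ihg =>
    obtain ⟨γ, hγ, hf⟩ := ihf
    obtain ⟨δ, hδ, hg⟩ := ihg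
    refine ⟨fun σ => γ σ \ δ σ, fun σ => BooleanSubalgebra.sdiff_mem (hγ σ) (hδ σ),
      fun v σ => ?_⟩
    rw [← lift_sdiff_lift, inf_sdiff_distrib_right, hf, hg, ← inf_sdiff_distrib_right]

lemma exists_coeff_eq_bot_iff (hf : IsTermFun C n f) :
    ∃ γ : (Fin n → Bool) → Booleanisation A,
      (∀ σ, γ σ ∈ BooleanSubalgebra.closure (lift '' C)) ∧ γ (fun _ => false) = lift (f ⊥) ∧
      ∀ v, f v = ⊥ ↔ ∀ σ, Disjoint (γ σ) (minterm v σ) := by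
  obtain ⟨γ, hγ, hf⟩ := hf.exists_coeff
  refine ⟨γ, hγ, ?_, fun v => ?_⟩
  · simpa only [minterm_bot_false, inf_top_eq] using (hf ⊥ fun _ => false).symm
  rw [← lift_eq_bot_iff, eq_bot_iff_forall_disjoint_minterm v]
  simp only [disjoint_iff, hf v]

lemma exists_coeff_eq_bot_iff_one {f : (Fin 1 → A) → A} (hf : IsTermFun C 1 f) :
    ∃ γ ∈ BooleanSubalgebra.closure (lift '' C),
      ∀ v, f v = ⊥ ↔ Disjoint γ (lift (v 0)) ∧ f ⊥ ≤ v 0 := by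
  obtain ⟨γ, hγ, hγ₀, hf⟩ := hf.exists_coeff_eq_bot_iff
  refine ⟨γ fun _ => true, hγ _, fun v => ?_⟩
  have hσ (σ : Fin 1 → Bool) : σ = fun _ => σ 0 :=
    funext fun i => congrArg σ (Subsingleton.elim i 0)
  have htrue : minterm v (fun _ => true) = lift (v 0) := by simp [minterm, literal]
  have hfalse : Disjoint (γ fun _ => false) (minterm v fun _ => false) ↔ f ⊥ ≤ v 0 := by
    rw [hγ₀, minterm_false, disjoint_comm, disjoint_comp_lift, Finset.univ_unique, sup_singleton]
    rfl
  rw [hf]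
  constructor
  · intro h
    exact ⟨htrue ▸ h _, hfalse.1 (h _)⟩
  · rintro ⟨h₁, h₀⟩ σ
    rw [hσ σ]
    cases σ 0
    exacts [hfalse.2 h₀, htrue ▸ h₁]

end IsTermFun

lemma exists_solSet_eq_of_finite (hC : IsErshovSubalgebra C)
    {S : Set (((Fin 1 → A) → A) × ((Fin 1 → A) → A))} (hfin : S.Finite)
    (hS : ∀ p ∈ S, IsTermFun C 1 p.1 ∧ IsTermFun C 1 p.2) :
    ∃ γ ∈ BooleanSubalgebra.closure (lift '' C), ∃ r ∈ C,
      ∀ v, v ∈ SolSet S ↔ Disjoint γ (lift (v 0)) ∧ r ≤ v 0 := by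
  have hterm (p) (hp : p ∈ S) : IsTermFun C 1 fun v => p.1 v ∆ p.2 v :=
    (hS p hp).1.symmDiff (hS p hp).2
  have (p) (hp : p ∈ S) : ∃ γ ∈ BooleanSubalgebra.closure (lift '' C),
      ∀ v, p.1 v = p.2 v ↔ Disjoint γ (lift (v 0)) ∧ p.1 ⊥ ∆ p.2 ⊥ ≤ v 0 := by
    obtain ⟨γ, hγ, h⟩ := (hterm p hp).exists_coeff_eq_bot_iff_one
    exact ⟨γ, hγ, fun v => by rw [← h, symmDiff_eq_bot]⟩
  choose! γ hγ h using this
  refine ⟨hfin.toFinset.sup γ, Finset.sup_mem _ BooleanSubalgebra.bot_mem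
      (fun _ ha _ hb => BooleanSubalgebra.sup_mem ha hb) _ _ (by simpa using hγ),
    hfin.toFinset.sup fun p => p.1 ⊥ ∆ p.2 ⊥, Finset.sup_mem C hC.bot_mem hC.sup_mem _ _
      (fun p hp => (hterm p (by simpa using hp)).apply_bot_mem hC), fun v => ?_⟩
  simp only [SolSet, Finset.disjoint_sup_left, Finset.sup_le_iff,
    Set.Finite.mem_toFinset, ← forall_and]
  exact forall₂_congr fun p hp => h p hp v

lemma WeakEquationallyNoetherian.exists_solSet_eq (hW : WeakEquationallyNoetherian A C)
    (hC : IsErshovSubalgebra C) {S : Set (((Fin 1 → A) → A) × ((Fin 1 → A) → A))}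
    (hS : ∀ p ∈ S, IsTermFun C 1 p.1 ∧ IsTermFun C 1 p.2) :
    ∃ γ ∈ BooleanSubalgebra.closure (lift '' C), ∃ r ∈ C,
      ∀ v, v ∈ SolSet S ↔ Disjoint γ (lift (v 0)) ∧ r ≤ v 0 := by
  obtain ⟨S', hfin, hS', hsol⟩ := hW 1 S hS
  exact hsol ▸ exists_solSet_eq_of_finite hC hfin hS'

lemma WeakEquationallyNoetherian.lubClosed (hW : WeakEquationallyNoetherian A C)
    (hC : IsErshovSubalgebra C) : LUBClosed C := by
  rintro D hD ⟨u, hu⟩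
  obtain ⟨γ, -, r, hr, hsol⟩ := hW.exists_solSet_eq hC
    (S := (fun d => (fun v => v 0 ⊔ d, fun v => v 0)) '' D)
    (by rintro _ ⟨d, hd, rfl⟩; exact ⟨(IsTermFun.proj 0).sup (.const (hD hd)), .proj 0⟩)
  have key (x : A) : x ∈ upperBounds D ↔ Disjoint γ (lift x) ∧ r ≤ x := by
    simpa [SolSet, mem_upperBounds] using hsol fun _ => x
  refine ⟨r, hr, ?_, fun x hx => ((key x).1 hx).2⟩
  have hur := (key (u ⊔ r)).1 fun d hd => le_sup_of_le_left (hu hd)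
  exact (key r).2 ⟨hur.1.mono_right (lift_le_lift.2 le_sup_right), le_rfl⟩

lemma WeakEquationallyNoetherian.unbddAnnihilatorPrincipal (hW : WeakEquationallyNoetherian A C)
    (hC : IsErshovSubalgebra C) : UnbddAnnihilatorPrincipal C := by
  intro D hD hunbdd
  obtain ⟨γ, hγ, r, -, hsol⟩ := hW.exists_solSet_eq hC
    (S := (fun d => (fun v => v 0 ⊓ d, fun _ => ⊥)) '' D)
    (by rintro _ ⟨d, hd, rfl⟩; exact ⟨(IsTermFun.proj 0).inf (.const (hD hd)), .const hC.bot_mem⟩)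
  have key (x : A) : (∀ d ∈ D, x ⊓ d = ⊥) ↔ Disjoint γ (lift x) ∧ r ≤ x := by
    simpa [SolSet] using hsol fun _ => x
  have hr : r = ⊥ := le_bot_iff.1 ((key ⊥).1 fun d _ => bot_inf_eq d).2
  obtain ⟨c, hc, rfl | rfl⟩ := mem_closure_lift_image hC hγ
  · refine absurd ⟨c, fun d hd => ?_⟩ hunbdd
    have := (key (d \ c)).2 ⟨disjoint_lift_lift.2 disjoint_sdiff_self_right, hr ▸ bot_le⟩ d hd
    rwa [inf_eq_left.2 sdiff_le, sdiff_eq_bot_iff] at this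
  · exact ⟨c, hc, Set.ext fun x => by simp [key, disjoint_comp_lift, hr]⟩

lemma disjoint_iff_of_isLUB {D : Set A} {d x : A} (hd : IsLUB D d) :
    (∀ c ∈ D, Disjoint x c) ↔ Disjoint x d := by
  refine ⟨fun h => ?_, fun h c hc => h.mono_right (hd.1 hc)⟩
  have : d ≤ d \ x := hd.2 fun c hc => le_sdiff.2 ⟨hd.1 hc, (h c hc).symm⟩
  exact disjoint_sdiff_self_right.mono_right this

variable {t : (Fin n → A) → A}

lemma isFinSolSet_forall_disjoint_of_bddAbove (hbot : ⊥ ∈ C) (hL : LUBClosed C) {D : Set A}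
    (hD : D ⊆ C) (hb : BddAbove D) (ht : IsTermFun C n t) :
    IsFinSolSet C n {v | ∀ c ∈ D, Disjoint (t v) c} := by
  obtain ⟨d, hd, hlub⟩ := hL D hD hb
  simp_rw [disjoint_iff_of_isLUB hlub, disjoint_iff]
  exact isFinSolSet_setOf_eq (ht.inf (.const hd)) (.const hbot)

lemma isFinSolSet_forall_disjoint (hbot : ⊥ ∈ C) (hL : LUBClosed C)
    (hU : UnbddAnnihilatorPrincipal C) {D : Set A} (hD : D ⊆ C) (ht : IsTermFun C n t) :
    IsFinSolSet C n {v | ∀ c ∈ D, Disjoint (t v) c} := by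
  by_cases hb : BddAbove D
  · exact isFinSolSet_forall_disjoint_of_bddAbove hbot hL hD hb ht
  obtain ⟨c, hc, hDc⟩ := hU D hD hb
  have (x : A) : (∀ d ∈ D, Disjoint x d) ↔ x ⊓ c = x := by
    simpa [disjoint_iff] using Set.ext_iff.1 hDc x
  simp_rw [this]
  exact isFinSolSet_setOf_eq (ht.inf (.const hc)) ht

lemma isFinSolSet_forall_le (hC : IsErshovSubalgebra C) (hL : LUBClosed C) {E : Set A}
    (hE : E ⊆ C) (ht : IsTermFun C n t) : IsFinSolSet C n {v | ∀ e ∈ E, t v ≤ e} := by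
  rcases E.eq_empty_or_nonempty with rfl | ⟨e₀, he₀⟩
  · simpa using isFinSolSet_univ
  have (x : A) : (∀ e ∈ E, x ≤ e) ↔ x ⊓ e₀ = x ∧ ∀ c ∈ (e₀ \ ·) '' E, Disjoint x c := by
    simp only [inf_eq_left, Set.forall_mem_image]
    exact ⟨fun h => ⟨h e₀ he₀, fun e he => disjoint_sdiff_self_right.mono_left (h e he)⟩,
      fun h e he => (h.2 he).left_le_of_le_sup_right (h.1.trans le_sup_sdiff)⟩
  simp_rw [this, Set.ofPred_and]
  refine (isFinSolSet_setOf_eq (ht.inf (.const (hE he₀))) ht).inter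
    (isFinSolSet_forall_disjoint_of_bddAbove hC.bot_mem hL ?_ ⟨e₀, ?_⟩ ht)
  · rintro _ ⟨e, he, rfl⟩
    exact hC.sdiff_mem _ (hE he₀) _ (hE he)
  · rintro _ ⟨e, -, rfl⟩
    exact sdiff_le

lemma isFinSolSet_forall_ge (hbot : ⊥ ∈ C) (hL : LUBClosed C) {D : Set A} (hD : D ⊆ C)
    (ht : IsTermFun C n t) :
    IsFinSolSet C n {v | ∀ d ∈ D, d ≤ t v} := by
  by_cases hb : BddAbove D
  · obtain ⟨d, hd, hlub⟩ := hL D hD hb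
    have (x : A) : (∀ c ∈ D, c ≤ x) ↔ d ⊔ x = x := by
      rw [sup_eq_right, isLUB_le_iff hlub]
      rfl
    simp_rw [this]
    exact isFinSolSet_setOf_eq ((IsTermFun.const hd).sup ht) ht
  · obtain ⟨d, hd, hne⟩ : ∃ d ∈ D, d ≠ ⊥ := by
      by_contra! h
      exact hb ⟨⊥, fun d hd => (h d hd).le⟩
    have : {v | ∀ c ∈ D, c ≤ t v} = {v : Fin n → A | d = ⊥} := by
      ext v
      simp only [Set.mem_ofPred_eq, hne, iff_false]
      exact fun h => hb ⟨t v, h⟩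
    rw [this]
    exact isFinSolSet_setOf_eq (.const (hD hd)) (.const hbot)

lemma isFinSolSet_forall_disjoint_lift (hC : IsErshovSubalgebra C) (hL : LUBClosed C)
    (hU : UnbddAnnihilatorPrincipal C) {Δ : Set (Booleanisation A)}
    (hΔ : Δ ⊆ BooleanSubalgebra.closure (lift '' C)) (ht : IsTermFun C n t) :
    IsFinSolSet C n {v | ∀ δ ∈ Δ, Disjoint δ (lift (t v))} := by
  have (x : A) : (∀ δ ∈ Δ, Disjoint δ (lift x)) ↔
      (∀ c ∈ {c ∈ C | lift c ∈ Δ}, Disjoint x c) ∧ ∀ e ∈ {e ∈ C | comp e ∈ Δ}, x ≤ e := by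
    refine ⟨fun h => ⟨fun c hc => (disjoint_lift_lift.1 (h _ hc.2)).symm,
      fun e he => disjoint_comp_lift.1 (h _ he.2)⟩, fun ⟨hD, hE⟩ δ hδ => ?_⟩
    obtain ⟨c, hc, rfl | rfl⟩ := mem_closure_lift_image hC (hΔ hδ)
    · exact disjoint_lift_lift.2 (hD c ⟨hc, hδ⟩).symm
    · exact disjoint_comp_lift.2 (hE c ⟨hc, hδ⟩)
  simp_rw [this, Set.ofPred_and]
  exact (isFinSolSet_forall_disjoint hC.bot_mem hL hU (fun _ h => h.1) ht).inter
    (isFinSolSet_forall_le hC hL (fun _ h => h.1) ht)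

lemma isFinSolSet_forall_disjoint_minterm (hC : IsErshovSubalgebra C) (hL : LUBClosed C)
    (hU : UnbddAnnihilatorPrincipal C) {σ : Fin n → Bool} {i : Fin n} (hi : σ i = true)
    {Δ : Set (Booleanisation A)} (hΔ : Δ ⊆ BooleanSubalgebra.closure (lift '' C)) :
    IsFinSolSet C n {v | ∀ δ ∈ Δ, Disjoint δ (minterm v σ)} := by
  obtain ⟨t, ht, htm⟩ := IsTermFun.exists_lift_eq_minterm (C := C) hi
  simp_rw [← htm]
  exact isFinSolSet_forall_disjoint_lift hC hL hU hΔ ht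

lemma isFinSolSet_forall_disjoint_minterm_false (hbot : ⊥ ∈ C) (hL : LUBClosed C) {D : Set A}
    (hD : D ⊆ C) :
    IsFinSolSet C n {v | ∀ δ ∈ lift '' D, Disjoint δ (minterm v fun _ => false)} := by
  simp_rw [Set.forall_mem_image, minterm_false, disjoint_comm (a := lift _), disjoint_comp_lift]
  exact isFinSolSet_forall_ge hbot hL hD (.finsetSup hbot univ)

theorem WeakEquationallyNoetherian.of_lubClosed (hC : IsErshovSubalgebra C) (hL : LUBClosed C)
    (hU : UnbddAnnihilatorPrincipal C) : WeakEquationallyNoetherian A C := by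
  intro n S hS
  show IsFinSolSet C n (SolSet S)
  have hterm (p) (hp : p ∈ S) : IsTermFun C n fun v => p.1 v ∆ p.2 v :=
    (hS p hp).1.symmDiff (hS p hp).2
  choose! γ hγ hγ₀ hsol using fun p hp => (hterm p hp).exists_coeff_eq_bot_iff
  have hS_eq : SolSet S = ⋂ σ, {v | ∀ δ ∈ (γ · σ) '' S, Disjoint δ (minterm v σ)} := by
    ext v
    simp only [SolSet, Set.mem_iInter, Set.mem_ofPred_eq, Set.forall_mem_image]
    constructor
    · intro h σ p hp
      exact (hsol p hp v).1 (symmDiff_eq_bot.2 (h p hp)) σ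
    · intro h p hp
      exact symmDiff_eq_bot.1 ((hsol p hp v).2 fun σ => h σ hp)
  rw [hS_eq]
  refine .iInter fun σ => ?_
  by_cases hσ : ∃ i, σ i = true
  · obtain ⟨i, hi⟩ := hσ
    refine isFinSolSet_forall_disjoint_minterm hC hL hU hi ?_
    rintro _ ⟨p, hp, rfl⟩
    exact hγ p hp σ
  · obtain rfl : σ = fun _ => false := funext fun i => by simpa using not_exists.1 hσ i
    have : (γ · fun _ => false) '' S = lift '' ((fun p => p.1 ⊥ ∆ p.2 ⊥) '' S) := by
      rw [Set.image_image]
      exact Set.image_congr hγ₀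
    rw [this]
    refine isFinSolSet_forall_disjoint_minterm_false hC.bot_mem hL ?_
    rintro _ ⟨p, hp, rfl⟩
    exact (hterm p hp).apply_bot_mem hC

end

theorem ershov_weakNoetherian_iff {A : Type*} [GeneralizedBooleanAlgebra A]
    {C : Set A}
    (hbot : ⊥ ∈ C)
    (hsup : ∀ a ∈ C, ∀ b ∈ C, a ⊔ b ∈ C)
    (hinf : ∀ a ∈ C, ∀ b ∈ C, a ⊓ b ∈ C)
    (hsdiff : ∀ a ∈ C, ∀ b ∈ C, a \ b ∈ C) :
    WeakEquationallyNoetherian A C ↔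
      ((∀ D ⊆ C, BddAbove D → ∃ d ∈ C, IsLUB D d) ∧
       (∀ D ⊆ C, ¬ BddAbove D →
         ∃ c ∈ C, {x : A | ∀ d ∈ D, x ⊓ d = ⊥} = {x : A | x ≤ c})) := by
  have hC : IsErshovSubalgebra C := ⟨hbot, hsup, hinf, hsdiff⟩
  exact ⟨fun hW => ⟨hW.lubClosed hC, hW.unbddAnnihilatorPrincipal hC⟩,
    fun ⟨hL, hU⟩ => .of_lubClosed hC hL hU⟩
end
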